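/- arXiv:2409.19555 — 5 statements merged into one kernel-verified Lean document; each statement's English description precedes it below -/
import Mathlib

section
/- Let R be a commutative ring and (θ₁, θ₂) a regular sequence in R. Then the element η = θ₁·z₁ + θ₂·z₂ of the polynomial ring R[z₁, z₂] is a nonzerodivisor. -/
/-!
For the lexicographic order with `z₁ > z₂`, the leading coefficient of `θ₁·z₁ + θ₂·z₂` is `θ₁`,
and a multivariate polynomial whose leading coefficient is a nonzerodivisor is itself one, since
the leading term of a product with it cannot cancel.
-/

open MvPolynomial

namespace MonomialOrder

variable {σ R : Type*} [CommSemiring R] (m : MonomialOrder σ)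

theorem leadingCoeff_C_mul_X_add_C_mul_X {i j : σ}
    (hji : Finsupp.single j 1 ≺[m] Finsupp.single i 1) {a : R} (ha : a ≠ 0) (b : R) :
    m.leadingCoeff (C a * X i + C b * X j) = a := by
  classical
  simp only [C_mul_X_eq_monomial]
  rw [leadingCoeff_add_of_lt, leadingCoeff_monomial]
  calc m.toSyn (m.degree (monomial (Finsupp.single j 1) b))
      ≤ m.toSyn (Finsupp.single j 1) := m.degree_monomial_le b
    _ < m.toSyn (Finsupp.single i 1) := hji
    _ = m.toSyn (m.degree (monomial (Finsupp.single i 1) a)) := by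
      rw [degree_monomial, if_neg ha]

theorem C_mul_X_add_C_mul_X_mem_nonZeroDivisors {i j : σ}
    (hji : Finsupp.single j 1 ≺[m] Finsupp.single i 1) {a : R} (ha : a ∈ nonZeroDivisors R)
    (b : R) : C a * X i + C b * X j ∈ nonZeroDivisors (MvPolynomial σ R) := by
  nontriviality R
  apply m.mem_nonZeroDivisors_of_leadingCoeff_mem_nonZeroDivisors
  rwa [m.leadingCoeff_C_mul_X_add_C_mul_X hji (nonZeroDivisors.ne_zero ha)]

end MonomialOrder

theorem stmt5_general (R : Type*) [CommRing R] (θ₁ θ₂ : R)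
    (h1 : θ₁ ∈ nonZeroDivisors R) :
    (C θ₁ * X 0 + C θ₂ * X 1 : MvPolynomial (Fin 2) R) ∈
      nonZeroDivisors (MvPolynomial (Fin 2) R) :=
  MonomialOrder.lex.C_mul_X_add_C_mul_X_mem_nonZeroDivisors
    (Finsupp.Lex.single_lt_iff.mpr (by decide)) h1 θ₂

/-- If `(θ₁, θ₂)` is a regular sequence in a commutative ring `R` (i.e. `θ₁` is a
nonzerodivisor on `R` and `θ₂` is a nonzerodivisor on `R/(θ₁)`), then
`η = θ₁·z₁ + θ₂·z₂` is a nonzerodivisor in the polynomial ring `R[z₁, z₂]`. -/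
theorem stmt5 (R : Type*) [CommRing R] (θ₁ θ₂ : R)
    (h1 : θ₁ ∈ nonZeroDivisors R)
    (h2 : Ideal.Quotient.mk (Ideal.span {θ₁}) θ₂ ∈
      nonZeroDivisors (R ⧸ Ideal.span {θ₁})) :
    (C θ₁ * X 0 + C θ₂ * X 1 : MvPolynomial (Fin 2) R) ∈
      nonZeroDivisors (MvPolynomial (Fin 2) R) :=
  stmt5_general R θ₁ θ₂ h1
end

section
/- Let R be a commutative ring and (a, b) a regular sequence in R. Then the kernel of the R-algebra homomorphism R[w₁, w₂] → R[t] sending w₁ ↦ a·t and w₂ ↦ b·t (the Rees algebra presentation of the ideal (a,b)) is the ideal generated by the single Koszul relation b·w₁ − a·w₂. -/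
/-!
The map sends a form `F` of degree `n` to `F(a, b) tⁿ`, so a polynomial lies in the kernel iff
each of its homogeneous components vanishes at `(a, b)`. Such a form of degree `n + 1` is
`X₀ G + c X₁ⁿ⁺¹`; regularity of `b` modulo `a` gives `c = a d`, and adding `d X₁ⁿ (b X₀ - a X₁)`
leaves `X₀ G'` with `G'` of degree `n`. Since `a` is a nonzerodivisor, `G'(a, b) = 0`, and
induction on the degree applies.
-/

open MvPolynomial Pointwise

namespace RingTheory.Sequence.IsWeaklyRegular

variable {R : Type*} [CommRing R] {a b : R}

lemma isSMulRegular_fst (h : IsWeaklyRegular R [a, b]) : IsSMulRegular R a :=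
  ((isWeaklyRegular_cons_iff R a [b]).1 h).1

lemma dvd_of_dvd_pow_mul (h : IsWeaklyRegular R [a, b]) (k : ℕ) {x : R}
    (hx : a ∣ b ^ k * x) : a ∣ x := by
  have hb := (isWeaklyRegular_singleton_iff _ b).1 ((isWeaklyRegular_cons_iff R a [b]).1 h).2
  have hmem : ∀ y : R, y ∈ a • (⊤ : Submodule R R) ↔ a ∣ y := fun y => by
    rw [← Submodule.ideal_span_singleton_smul, smul_eq_mul, Ideal.mul_top,
      Ideal.mem_span_singleton]
  rw [← hmem] at hx ⊢
  exact mem_of_isSMulRegular_quotient_of_smul_mem (hb.pow k) hx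

end RingTheory.Sequence.IsWeaklyRegular

namespace MvPolynomial

section Scaling

variable {σ R : Type*} [CommSemiring R]

lemma aeval_C_mul_X_monomial (x : σ → R) (d : σ →₀ ℕ) (c : R) :
    aeval (fun i => Polynomial.C (x i) * Polynomial.X) (monomial d c) =
      Polynomial.C (aeval x (monomial d c)) * Polynomial.X ^ d.degree := by
  simp only [aeval_monomial, mul_pow, Finsupp.prod_mul, Polynomial.algebraMap_eq,
    Algebra.algebraMap_self, RingHom.id_apply, map_mul, map_finsuppProd, map_pow, mul_assoc]
  rw [Finsupp.degree_apply, ← Finset.prod_pow_eq_pow_sum]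
  rfl

lemma coeff_aeval_C_mul_X (x : σ → R) (p : MvPolynomial σ R) (n : ℕ) :
    (aeval (fun i => Polynomial.C (x i) * Polynomial.X) p).coeff n =
      aeval x (homogeneousComponent n p) := by
  induction p using MvPolynomial.induction_on' with
  | add p q hp hq => simp only [map_add, Polynomial.coeff_add, hp, hq]
  | monomial d c =>
    rw [aeval_C_mul_X_monomial, Polynomial.coeff_C_mul_X_pow,
      homogeneousComponent_of_mem (isHomogeneous_monomial c rfl)]
    split_ifs <;> simp_all

end Scaling

variable {R : Type*} [CommRing R]

lemma IsHomogeneous.exists_eq_X_zero_mul_add_C_mul_X_one_pow {F : MvPolynomial (Fin 2) R}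
    {n : ℕ} (hF : F.IsHomogeneous (n + 1)) :
    ∃ G c, G.IsHomogeneous n ∧ F = X 0 * G + C c * X 1 ^ (n + 1) := by
  induction hF using IsWeightedHomogeneous.induction_on with
  | zero => exact ⟨0, 0, isHomogeneous_zero _ _ _, by simp⟩
  | add p q _ _ hp hq =>
    obtain ⟨G, c, hG, rfl⟩ := hp
    obtain ⟨G', c', hG', rfl⟩ := hq
    exact ⟨G + G', c + c', hG.add hG', by simp only [map_add]; ring⟩
  | monomial d r hd =>
    rw [monomial_eq, Finsupp.prod_fintype _ _ (fun _ => pow_zero _), Fin.prod_univ_two]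
    have hdeg : d 0 + d 1 = n + 1 := by
      simpa [Finsupp.weight_apply, Finsupp.sum_fintype] using hd
    rcases d0 : d 0 with _ | k
    · rw [d0, zero_add] at hdeg
      exact ⟨0, r, isHomogeneous_zero _ _ _, by simp [hdeg]⟩
    · refine ⟨C r * X 0 ^ k * X 1 ^ d 1, 0, ?_, by simp only [map_zero]; ring⟩
      rw [d0] at hdeg
      exact (show k + d 1 = n by omega) ▸
        (isHomogeneous_C_mul_X_pow r 0 k).mul (isHomogeneous_X_pow 1 (d 1))

variable {a b : R}

open RingTheory.Sequence in
theorem IsHomogeneous.mem_span_koszul_of_aeval_eq_zero {n : ℕ} {F : MvPolynomial (Fin 2) R}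
    (hF : F.IsHomogeneous n) (hab : IsWeaklyRegular R [a, b])
    (hFab : MvPolynomial.aeval ![a, b] F = 0) :
    F ∈ Ideal.span {C b * X 0 - C a * X 1} := by
  induction n generalizing F with
  | zero =>
    rw [totalDegree_eq_zero_iff_eq_C.1 ((totalDegree_zero_iff_isHomogeneous _).2 hF)] at hFab ⊢
    rw [aeval_C, Algebra.algebraMap_self, RingHom.id_apply] at hFab
    rw [hFab, C_0]
    exact zero_mem _
  | succ n ih =>
    obtain ⟨G, c, hG, rfl⟩ := hF.exists_eq_X_zero_mul_add_C_mul_X_one_pow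
    have hval : a * MvPolynomial.aeval ![a, b] G + c * b ^ (n + 1) = 0 := by
      simpa only [map_add, map_mul, map_pow, aeval_X, aeval_C, Algebra.algebraMap_self,
        RingHom.id_apply, Matrix.cons_val_zero, Matrix.cons_val_one] using hFab
    obtain ⟨d, rfl⟩ : a ∣ c :=
      hab.dvd_of_dvd_pow_mul (n + 1) ⟨-MvPolynomial.aeval ![a, b] G, by linear_combination hval⟩
    have hG' : MvPolynomial.aeval ![a, b] (G + C (d * b) * X 1 ^ n) = 0 :=
      hab.isSMulRegular_fst.right_eq_zero_of_smul <| by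
        simp only [map_add, map_mul, aeval_C, map_pow, aeval_X, smul_eq_mul, Matrix.cons_val_one,
          Matrix.cons_val_zero, Algebra.algebraMap_self, RingHom.id_apply]
        linear_combination hval
    have hrel : X 0 * G + C (a * d) * X 1 ^ (n + 1) =
        X 0 * (G + C (d * b) * X 1 ^ n) - C d * X 1 ^ n * (C b * X 0 - C a * X 1) := by
      simp only [map_mul]
      ring
    rw [hrel]
    exact sub_mem (Ideal.mul_mem_left _ _ (ih (hG.add (isHomogeneous_C_mul_X_pow _ _ _)) hG'))
      (Ideal.mul_mem_left _ _ (Ideal.mem_span_singleton_self _))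

end MvPolynomial

/-- For `(a, b)` a regular sequence in a commutative ring `R`, the kernel of the `R`-algebra
map `R[w₁, w₂] → R[t]`, `w₁ ↦ a·t`, `w₂ ↦ b·t` (presenting the Rees algebra of the ideal
`(a,b)`) is generated by the single Koszul relation `b·w₁ − a·w₂`. -/
theorem stmt6 (R : Type*) [CommRing R] (a b : R)
    (hreg : RingTheory.Sequence.IsRegular R [a, b]) :
    RingHom.ker (MvPolynomial.aeval
        (![Polynomial.C a * Polynomial.X, Polynomial.C b * Polynomial.X] :
          Fin 2 → Polynomial R) :
        MvPolynomial (Fin 2) R →ₐ[R] Polynomial R).toRingHom =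
      Ideal.span {C b * X 0 - C a * X 1} := by
  have hφ : ![Polynomial.C a * Polynomial.X, Polynomial.C b * Polynomial.X] =
      fun i => Polynomial.C (![a, b] i) * Polynomial.X := by
    ext1 i
    fin_cases i <;> rfl
  apply le_antisymm
  · intro f hf
    rw [RingHom.mem_ker, AlgHom.toRingHom_eq_coe, RingHom.coe_coe, hφ] at hf
    rw [← sum_homogeneousComponent f]
    refine Ideal.sum_mem _ fun n _ =>
      (homogeneousComponent_isHomogeneous n f).mem_span_koszul_of_aeval_eq_zero hreg.1 ?_
    rw [← coeff_aeval_C_mul_X, hf, Polynomial.coeff_zero]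
  · rw [Ideal.span_le, Set.singleton_subset_iff, SetLike.mem_coe, RingHom.mem_ker]
    simp only [AlgHom.toRingHom_eq_coe, RingHom.coe_coe, map_sub, map_mul, aeval_C, aeval_X,
      Polynomial.algebraMap_eq, Matrix.cons_val_zero, Matrix.cons_val_one]
    ring
end

section
/- Let k be an algebraically closed field of characteristic 0 and w ≥ 1. Consider the hypersurface X = {u² − v² = x² − y^{2w}} in A⁴ with the plane Y = {u+v = 0, x+y^w = 0} ⊂ X. The scheme-theoretic intersection of the singular locus of X with Y (identifying Y ≅ A² with coordinates (y, v)) is the subscheme cut out by the ideal (y^w, v), a fat point of length w. -/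
open MvPolynomial

/-- For `X = {u² − v² = x² − y^{2w}} ⊂ 𝔸⁴` and the plane `Y = {u+v = 0, x+y^w = 0} ≅ 𝔸²`
with coordinates `(y, v)`, the scheme-theoretic intersection of the singular locus of `X`
(cut out by the Jacobian ideal of `f = u² − v² − x² + y^{2w}`) with `Y` is the fat point of
length `w` cut out by the ideal `(y^w, v)`.

Here `u = X 0, v = X 1, x = X 2, y = X 3` in the source, the restriction to `Y` is the
substitution `u ↦ −v, x ↦ −y^w`, and in the target `y = X 0, v = X 1`. -/
theorem stmt9 (k : Type*) [Field k] [IsAlgClosed k] [CharZero k] (w : ℕ) (hw : 1 ≤ w) :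
    letI f : MvPolynomial (Fin 4) k :=
      (X 0) ^ 2 - (X 1) ^ 2 - (X 2) ^ 2 + (X 3) ^ (2 * w)
    letI φ : MvPolynomial (Fin 4) k →ₐ[k] MvPolynomial (Fin 2) k :=
      MvPolynomial.aeval ![-(X 1), X 1, -((X 0) ^ w), X 0]
    Ideal.map φ.toRingHom
        (Ideal.span {f, pderiv 0 f, pderiv 1 f, pderiv 2 f, pderiv 3 f}) =
      Ideal.span {(X 0 : MvPolynomial (Fin 2) k) ^ w, X 1} := by
  set f : MvPolynomial (Fin 4) k :=
      (X 0) ^ 2 - (X 1) ^ 2 - (X 2) ^ 2 + (X 3) ^ (2 * w) with hf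
  set φ : MvPolynomial (Fin 4) k →ₐ[k] MvPolynomial (Fin 2) k :=
      MvPolynomial.aeval ![-(X 1), X 1, -((X 0) ^ w), X 0] with hφ
  have h0 : φ.toRingHom f = 0 := by
    simp [hf, hφ, mul_comm 2 w, pow_mul]
  have h1 : φ.toRingHom (pderiv 0 f) = -(2 * X 1) := by
    simp [hf, hφ, map_ofNat]
  have h2 : φ.toRingHom (pderiv 1 f) = -(2 * X 1) := by
    simp [hf, hφ, map_ofNat]
  have h3 : φ.toRingHom (pderiv 2 f) = 2 * X 0 ^ w := by
    simp [hf, hφ, map_ofNat]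
  have h4 : φ.toRingHom (pderiv 3 f) =
      2 * (w : MvPolynomial (Fin 2) k) * X 0 ^ (2 * w - 1) := by
    simp [hf, hφ, map_ofNat]
  rw [Ideal.map_span, Set.image_insert_eq, Set.image_insert_eq, Set.image_insert_eq,
    Set.image_insert_eq, Set.image_singleton, h0, h1, h2, h3, h4]
  apply le_antisymm
  · rw [Ideal.span_le]
    intro p hp
    simp only [Set.mem_insert_iff, Set.mem_singleton_iff] at hp
    have hXw : (X 0 : MvPolynomial (Fin 2) k) ^ w ∈
        Ideal.span {(X 0 : MvPolynomial (Fin 2) k) ^ w, X 1} :=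
      Ideal.subset_span (by simp)
    have hX1 : (X 1 : MvPolynomial (Fin 2) k) ∈
        Ideal.span {(X 0 : MvPolynomial (Fin 2) k) ^ w, X 1} :=
      Ideal.subset_span (by simp)
    rcases hp with rfl | rfl | rfl | rfl | rfl
    · exact Ideal.zero_mem _
    · exact neg_mem (Ideal.mul_mem_left _ _ hX1)
    · exact neg_mem (Ideal.mul_mem_left _ _ hX1)
    · exact Ideal.mul_mem_left _ _ hXw
    · have hexp : 2 * w - 1 = (w - 1) + w := by omega
      have heq : 2 * (w : MvPolynomial (Fin 2) k) * X 0 ^ (2 * w - 1) =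
          (2 * (w : MvPolynomial (Fin 2) k) * X 0 ^ (w - 1)) * X 0 ^ w := by
        rw [hexp, pow_add]; ring
      rw [heq]
      exact Ideal.mul_mem_left _ _ hXw
  · rw [Ideal.span_le]
    intro p hp
    simp only [Set.mem_insert_iff, Set.mem_singleton_iff] at hp
    have hb : (2 * X 0 ^ w : MvPolynomial (Fin 2) k) ∈
        Ideal.span ({0, -(2 * X 1), -(2 * X 1), 2 * X 0 ^ w,
          2 * (w : MvPolynomial (Fin 2) k) * X 0 ^ (2 * w - 1)} :
          Set (MvPolynomial (Fin 2) k)) :=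
      Ideal.subset_span (by simp)
    have ha : (-(2 * X 1) : MvPolynomial (Fin 2) k) ∈
        Ideal.span ({0, -(2 * X 1), -(2 * X 1), 2 * X 0 ^ w,
          2 * (w : MvPolynomial (Fin 2) k) * X 0 ^ (2 * w - 1)} :
          Set (MvPolynomial (Fin 2) k)) :=
      Ideal.subset_span (by simp)
    have h2C : (2 : MvPolynomial (Fin 2) k) = C (2 : k) := by simp [map_ofNat]
    rcases hp with rfl | rfl
    · have key : C (2⁻¹ : k) * (2 * X 0 ^ w) = (X 0 : MvPolynomial (Fin 2) k) ^ w := by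
        rw [h2C, ← mul_assoc, ← C_mul]
        norm_num
      have hm := Ideal.mul_mem_left _ (C (2⁻¹ : k)) hb
      rwa [key] at hm
    · have key : C (-2⁻¹ : k) * -(2 * X 1) = (X 1 : MvPolynomial (Fin 2) k) := by
        rw [mul_neg, h2C, ← mul_assoc, ← C_mul]
        norm_num
      have hm := Ideal.mul_mem_left _ (C (-2⁻¹ : k)) ha
      rwa [key] at hm
end

section
/- Let R be a commutative ring and (a, b) a regular sequence in R. Then the affine chart of the blowup of Spec R along the ideal (a, b) where the first generator generates the pullback ideal is isomorphic to Spec R[t]/(t·a − b), and a ≡ 0, t·a ≡ b identifies its exceptional locus; moreover t·a − b is a nonzerodivisor in R[t], so this chart is a hypersurface in Spec R[t]. -/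
/-!
The polynomial `c = aX - b` is a nonzerodivisor because its leading coefficient `a` is. If
`p(b/a) = 0` in `R_a` and `n = deg p`, then `aⁿ p ≡ r (mod c)` for a constant `r ∈ R`; evaluating
at `b/a` shows that `r` vanishes in `R_a`, hence in `R`, so `c ∣ aⁿ p`. Finally `a` is a
nonzerodivisor modulo `c`: from `a u = c v` we get `a ∣ b v`, so `a ∣ v` by regularity of `b`
modulo `a`, and cancelling `a` gives `c ∣ u`.
-/

open Polynomial
open scoped nonZeroDivisors

namespace RingTheory.Sequence.IsRegular

variable {R : Type*} [CommRing R] {a b : R}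

theorem pair_left_mem_nonZeroDivisors (h : IsRegular R [a, b]) : a ∈ R⁰ := by
  rw [isRegular_cons_iff] at h
  exact isRegular_iff_mem_nonZeroDivisors.mp (isLeftRegular_iff_isRegular.mp h.1.isLeftRegular)

open Pointwise in
theorem pair_dvd_of_dvd_mul (h : IsRegular R [a, b]) {x : R} (hx : a ∣ b * x) : a ∣ x := by
  rw [isRegular_cons_iff, isRegular_cons_iff,
    isSMulRegular_quotient_iff_mem_of_smul_mem] at h
  have hspan : ∀ y : R, y ∈ (a • ⊤ : Submodule R R) ↔ a ∣ y := fun y => by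
    rw [← Submodule.ideal_span_singleton_smul, smul_eq_mul, Ideal.mul_top,
      Ideal.mem_span_singleton]
  rw [← hspan] at hx ⊢
  exact h.2.1 x hx

end RingTheory.Sequence.IsRegular

section RegularPair

variable {S : Type*} [CommRing S] {x y : S}

theorem dvd_of_dvd_mul_of_regular_pair (hx : x ∈ S⁰) (hy : ∀ v, x ∣ y * v → x ∣ v) {u : S}
    (h : y ∣ x * u) : y ∣ u := by
  obtain ⟨v, hv⟩ := h
  obtain ⟨w, rfl⟩ := hy v ⟨u, hv.symm⟩
  exact ⟨w, (mul_cancel_left_mem_nonZeroDivisors hx).mp (by rw [hv, mul_left_comm])⟩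

theorem dvd_of_dvd_pow_mul_of_regular_pair (hx : x ∈ S⁰) (hy : ∀ v, x ∣ y * v → x ∣ v)
    (n : ℕ) {u : S} (h : y ∣ x ^ n * u) : y ∣ u := by
  induction n generalizing u with
  | zero => simpa using h
  | succ n ih =>
    rw [pow_succ, mul_assoc] at h
    exact dvd_of_dvd_mul_of_regular_pair hx hy (ih h)

end RegularPair

namespace Polynomial

variable {R : Type*} [CommRing R] {a b : R}

theorem C_mul_X_sub_C_mem_nonZeroDivisors (ha : a ∈ R⁰) : C a * X - C b ∈ R[X]⁰ := by
  nontriviality R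
  apply mem_nonZeroDivisors_of_leadingCoeff
  rwa [sub_eq_add_neg, ← C_neg, leadingCoeff_linear (nonZeroDivisors.ne_zero ha)]

theorem C_dvd_of_C_dvd_C_mul (hb : ∀ x, a ∣ b * x → a ∣ x) {p : R[X]} (h : C a ∣ C b * p) :
    C a ∣ p := by
  rw [C_dvd_iff_dvd_coeff] at h ⊢
  exact fun i => hb _ (by simpa only [coeff_C_mul] using h i)

theorem C_dvd_of_C_dvd_C_mul_X_sub_C_mul (hb : ∀ x, a ∣ b * x → a ∣ x) {p : R[X]}
    (h : C a ∣ (C a * X - C b) * p) : C a ∣ p := by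
  refine C_dvd_of_C_dvd_C_mul hb ?_
  have hbp : C b * p = C a * (X * p) - (C a * X - C b) * p := by ring
  rw [hbp]
  exact dvd_sub (dvd_mul_right _ _) h

theorem exists_C_mul_X_sub_C_dvd_C_pow_mul_sub_C (a b : R) (n : ℕ) {p : R[X]}
    (hp : p.natDegree ≤ n) : ∃ r : R, C a * X - C b ∣ C a ^ n * p - C r := by
  induction n generalizing p with
  | zero =>
    refine ⟨p.coeff 0, ?_⟩
    rw [pow_zero, one_mul, ← eq_C_of_natDegree_le_zero hp, sub_self]
    exact dvd_zero _
  | succ n ih =>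
    obtain ⟨r, hr⟩ := ih (p := p.divX) (by rw [natDegree_divX_eq_natDegree_tsub_one]; omega)
    refine ⟨a ^ (n + 1) * p.coeff 0 + b * r, ?_⟩
    have hsplit : C a ^ (n + 1) * p - C (a ^ (n + 1) * p.coeff 0 + b * r) =
        C a * X * (C a ^ n * p.divX - C r) + C r * (C a * X - C b) := by
      simp only [map_add, map_mul, map_pow]
      linear_combination -(C a ^ (n + 1)) * X_mul_divX_add p
    rw [hsplit]
    exact dvd_add (dvd_mul_of_dvd_right hr _) (dvd_mul_left _ _)

theorem ker_aeval_mul_invSelf {A : Type*} [CommRing A] [Algebra R A] [IsLocalization.Away a A]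
    (ha : a ∈ R⁰) (hb : ∀ x, a ∣ b * x → a ∣ x) :
    RingHom.ker (aeval (algebraMap R A b * IsLocalization.Away.invSelf a) : R[X] →ₐ[R] A) =
      Ideal.span {C a * X - C b} := by
  set f : A := algebraMap R A b * IsLocalization.Away.invSelf a
  have hc : aeval f (C a * X - C b) = 0 := by
    simp only [map_sub, map_mul, aeval_C, aeval_X, f]
    linear_combination algebraMap R A b * IsLocalization.Away.mul_invSelf (S := A) a
  apply le_antisymm
  · intro p hp
    obtain ⟨r, q, hq⟩ := exists_C_mul_X_sub_C_dvd_C_pow_mul_sub_C a b p.natDegree le_rfl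
    have hr : r = 0 := by
      apply IsLocalization.injective A (Submonoid.powers_le.mpr ha)
      have heval := congrArg (aeval f) hq
      rw [map_mul, hc, zero_mul, map_sub, map_mul, RingHom.mem_ker.mp hp] at heval
      simpa using heval
    rw [hr, map_zero, sub_zero] at hq
    refine Ideal.mem_span_singleton.mpr (dvd_of_dvd_pow_mul_of_regular_pair ?_
      (fun _ => C_dvd_of_C_dvd_C_mul_X_sub_C_mul hb) _ ⟨q, hq⟩)
    exact mem_nonZeroDivisors_of_leadingCoeff (by rwa [leadingCoeff_C])
  · rw [Ideal.span_le, Set.singleton_subset_iff]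
    exact hc

end Polynomial

/-- For `(a, b)` a regular sequence in a commutative ring `R`, the blowup chart
`Spec R[t]/(t·a − b)` is a hypersurface: `t·a − b` is a nonzerodivisor in `R[t]`, and the
kernel of the natural map `R[t] → R_a`, `t ↦ b/a` (whose image is the chart `R[b/a]` of the
blowup of `Spec R` along `(a,b)` where the first generator generates the pullback ideal)
is exactly `(t·a − b)`. -/
theorem stmt13 (R : Type*) [CommRing R] (a b : R)
    (hreg : RingTheory.Sequence.IsRegular R [a, b]) :
    (Polynomial.C a * Polynomial.X - Polynomial.C b) ∈ nonZeroDivisors (Polynomial R) ∧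
      RingHom.ker (Polynomial.aeval
          (algebraMap R (Localization.Away a) b * IsLocalization.Away.invSelf a) :
          Polynomial R →ₐ[R] Localization.Away a).toRingHom =
        Ideal.span {Polynomial.C a * Polynomial.X - Polynomial.C b} :=
  ⟨C_mul_X_sub_C_mem_nonZeroDivisors hreg.pair_left_mem_nonZeroDivisors,
    ker_aeval_mul_invSelf hreg.pair_left_mem_nonZeroDivisors fun _ => hreg.pair_dvd_of_dvd_mul⟩
end

section
/- Let R be a commutative ring and (a,b) a regular sequence. Then the quotient R[w₁,w₂]/(b·w₁ − a·w₂) is an integral domain whenever R is an integral domain, and more generally b·w₁ − a·w₂ is a prime element of R[w₁, w₂] when R is a UFD and a, b are coprime nonzero elements. -/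
/-!
Over `A = R[w₁]` the form `b·w₁ − a·w₂` is, up to sign, the linear polynomial `u·X − v` with
`u = a` and `v = b·w₁`, and `v` is a nonzerodivisor modulo `u` because `(a, b)` is regular.
For such `u ≠ 0, v` over a domain `A`, the ideal `(u·X − v)` is the kernel of `X ↦ v/u` into
`Frac A`: for `f` in the kernel, `uⁿ·f(X) = F(u·X)` with `F = scaleRoots f u` vanishing at `v`,
so `u·X − v ∣ uⁿ·f`, and `u` is a nonzerodivisor modulo `u·X − v` (compare coefficients).
-/

open Pointwise

namespace Polynomial

variable {A : Type*} [CommRing A] {u v : A}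

theorem C_mul_X_sub_C_dvd_C_pow_mul {f : A[X]} (h : (f.scaleRoots u).IsRoot v) :
    C u * X - C v ∣ C u ^ f.natDegree * f := by
  obtain ⟨q, hq⟩ := dvd_iff_isRoot.mpr h
  have hsubst := congrArg (eval₂ C (C u * X)) hq
  rw [scaleRoots_eval₂_mul, eval₂_C_X, eval₂_mul, eval₂_sub, eval₂_X, eval₂_C] at hsubst
  exact ⟨_, hsubst⟩

variable [IsDomain A]

theorem dvd_of_C_mul_X_sub_C_dvd_C_mul (hu : u ≠ 0) (hv : ∀ s, u ∣ v * s → u ∣ s) {g : A[X]}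
    (hg : C u * X - C v ∣ C u * g) : C u * X - C v ∣ g := by
  obtain ⟨h, hh⟩ := hg
  obtain ⟨h', rfl⟩ : C u ∣ h := by
    refine C_dvd_iff_dvd_coeff _ _ |>.mpr fun k ↦ hv _ ⟨(X * h).coeff k - g.coeff k, ?_⟩
    have hk := congrArg (coeff · k) hh
    simp only [coeff_C_mul, sub_mul, mul_assoc, coeff_sub] at hk
    linear_combination hk
  exact ⟨h', mul_left_cancel₀ (C_ne_zero.mpr hu) (by rw [hh]; ring)⟩

theorem dvd_of_C_mul_X_sub_C_dvd_C_pow_mul (hu : u ≠ 0) (hv : ∀ s, u ∣ v * s → u ∣ s) {g : A[X]} :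
    ∀ n : ℕ, C u * X - C v ∣ C u ^ n * g → C u * X - C v ∣ g
  | 0, h => by simpa using h
  | n + 1, h => dvd_of_C_mul_X_sub_C_dvd_C_pow_mul hu hv n <|
      dvd_of_C_mul_X_sub_C_dvd_C_mul hu hv (by rwa [← mul_assoc, ← pow_succ'])

theorem prime_C_mul_X_sub_C (hu : u ≠ 0) (hv : ∀ s, u ∣ v * s → u ∣ s) :
    Prime (C u * X - C v) := by
  let K := FractionRing A
  let φ : A[X] →+* K := eval₂RingHom (algebraMap A K) (algebraMap A K v / algebraMap A K u)
  have hu' : algebraMap A K u ≠ 0 := (map_ne_zero_iff _ (IsFractionRing.injective A K)).mpr hu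
  have hφ : φ (C u * X - C v) = 0 := by simp [φ, mul_div_cancel₀ _ hu']
  have hker : RingHom.ker φ = Ideal.span {C u * X - C v} := by
    refine le_antisymm (fun f hf ↦ ?_) ((Ideal.span_singleton_le_iff_mem _).mpr hφ)
    have hroot : (f.scaleRoots u).IsRoot v := by
      apply IsFractionRing.injective A K
      rw [← eval₂_at_apply, map_zero, ← mul_div_cancel₀ (algebraMap A K v) hu',
        scaleRoots_eval₂_mul, ← coe_eval₂RingHom, hf, mul_zero]
    exact Ideal.mem_span_singleton.mpr <|
      dvd_of_C_mul_X_sub_C_dvd_C_pow_mul hu hv _ (C_mul_X_sub_C_dvd_C_pow_mul hroot)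
  have hne : C u * X - C v ≠ 0 := fun h ↦ hu (by simpa using congrArg (coeff · 1) h)
  exact (Ideal.span_singleton_prime hne).mp (hker ▸ RingHom.ker_isPrime φ)

end Polynomial

namespace MvPolynomial

theorem C_dvd_of_C_dvd_C_mul_X_mul {σ R : Type*} [CommSemiring R] {a b : R}
    (hab : ∀ s, a ∣ b * s → a ∣ s) (i : σ) {p : MvPolynomial σ R} (h : C a ∣ C b * X i * p) :
    C a ∣ p := by
  refine (C_dvd_iff_dvd_coeff _ _).mpr fun m ↦ hab _ ?_
  have hm := (C_dvd_iff_dvd_coeff _ _).mp h (Finsupp.single i 1 + m)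
  rwa [mul_assoc, coeff_C_mul, coeff_X_mul] at hm

theorem prime_C_mul_X_sub_C_mul_X {σ R : Type*} [CommRing R] [IsDomain R]
    {a b : R} (ha : a ≠ 0) (hab : ∀ s, a ∣ b * s → a ∣ s) {i j : σ} (hij : i ≠ j) :
    Prime (C b * X i - C a * X j : MvPolynomial σ R) := by
  classical
  let e := (renameEquiv R (Equiv.optionSubtypeNe j).symm).trans (optionEquivLeft R {k // k ≠ j})
  have he : e (C b * X i - C a * X j) =
      -(Polynomial.C (C a) * Polynomial.X - Polynomial.C (C b * X ⟨i, hij⟩)) := by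
    simp [e, Equiv.optionSubtypeNe_symm_of_ne hij]
  rw [← MulEquiv.prime_iff e, he]
  exact (Polynomial.prime_C_mul_X_sub_C (C_ne_zero.mpr ha)
    fun s hs ↦ C_dvd_of_C_dvd_C_mul_X_mul hab _ hs).neg

end MvPolynomial

theorem RingTheory.Sequence.IsWeaklyRegular.dvd_of_dvd_mul {R : Type*} [CommRing R] {a b : R}
    (h : IsWeaklyRegular R [a, b]) {s : R} (hs : a ∣ b * s) : a ∣ s := by
  have hmem (x : R) : x ∈ a • (⊤ : Submodule R R) ↔ a ∣ x := by
    rw [← Submodule.ideal_span_singleton_smul, smul_eq_mul, Ideal.mul_top,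
      Ideal.mem_span_singleton]
  have hb := ((isWeaklyRegular_cons_iff R a [b]).mp h).2
  rw [isWeaklyRegular_singleton_iff, isSMulRegular_quotient_iff_mem_of_smul_mem] at hb
  exact (hmem s).mp (hb s ((hmem _).mpr hs))

open MvPolynomial

/-- For `(a, b)` a regular sequence in an integral domain `R`, the quotient
`R[w₁,w₂]/(b·w₁ − a·w₂)` is an integral domain; more generally, if `R` is a UFD and `a, b`
are coprime nonzero elements, then `b·w₁ − a·w₂` is a prime element of `R[w₁, w₂]`. -/
theorem stmt19 (R : Type*) [CommRing R] [IsDomain R] (a b : R)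
    (hreg : RingTheory.Sequence.IsRegular R [a, b]) :
    IsDomain (MvPolynomial (Fin 2) R ⧸
        Ideal.span {(C b * X 0 - C a * X 1 : MvPolynomial (Fin 2) R)}) ∧
      (UniqueFactorizationMonoid R → IsRelPrime a b → a ≠ 0 → b ≠ 0 →
        Prime (C b * X 0 - C a * X 1 : MvPolynomial (Fin 2) R)) := by
  have ha : a ≠ 0 := by
    rintro rfl
    exact IsSMulRegular.not_zero
      ((RingTheory.Sequence.isWeaklyRegular_cons_iff R 0 [b]).mp hreg.1).1
  have hp : Prime (C b * X 0 - C a * X 1 : MvPolynomial (Fin 2) R) :=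
    prime_C_mul_X_sub_C_mul_X ha (fun _ ↦ hreg.1.dvd_of_dvd_mul) (by decide)
  refine ⟨?_, fun _ _ _ _ ↦ hp⟩
  rw [Ideal.Quotient.isDomain_iff_prime]
  exact (Ideal.span_singleton_prime hp.ne_zero).mpr hp
end
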